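/- Let p ∈ (1,∞) and δ ≥ 0 (change of shift). For every ε ∈ (0,1) there exists a constant c_ε > 0 depending only on p and ε such that for all 3×3 real matrices P, Q and all t ≥ 0 one has both φ_{|P|}(t) ≤ c_ε·φ_{|Q|}(t) + ε·φ_{|P|}(|P−Q|) and φ_{|P|}(t) ≤ c_ε·φ_{|Q|}(t) + ε·φ_{|Q|}(|P−Q|), where |·| denotes the Frobenius norm. -/

import Mathlib

/-- The derivative `φ'(t) = (δ+t)^(p-2)·t` of the N-function `φ = φ_{p,δ}`. -/
noncomputable def phiDeriv (p δ t : ℝ) : ℝ := (δ + t) ^ (p - 2) * t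

/-- The shifted N-function `φ_a(t) = ∫₀ᵗ φ'(a+s)·s/(a+s) ds`. -/
noncomputable def phiShift (p δ a t : ℝ) : ℝ :=
  ∫ s in (0:ℝ)..t, phiDeriv p δ (a + s) * s / (a + s)

/-- The Frobenius norm of a 3×3 real matrix. -/
noncomputable def frob (P : Matrix (Fin 3) (Fin 3) ℝ) : ℝ :=
  Real.sqrt (∑ i, ∑ j, (P i j) ^ 2)

/-!
The shifted function `φ_a` of `φ_{p,δ}` is `φ_{p,δ+a}`, so it suffices to compare `φ_{p,A}` with
`φ_{p,B}` for shifts `A = δ + |P|`, `B = δ + |Q|` with `|A - B| ≤ d := |P - Q|`. Up to the factor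
`p + 1`, `φ_{p,K}(t)` is `t φ'_{p,K}(t) = (K + t)^(p-2) t²`, and moving the shift by at most
`(L - 1) t` changes this quantity by at most the factor `L^|p-2|`. For `t ≥ θ d` this gives
`φ_A(t) ≲ φ_B(t)` with `L = 1 + 1/θ`. For `t ≤ θ d`, monotonicity of `φ'` gives
`φ_A(t) ≤ θ d φ'_A(d)`, and with `θ = ε / ((p + 1) 2^|p-2|)` this is at most `ε φ_A(d)` and
`ε φ_B(d)`.
-/

open Real Set MeasureTheory

lemma rpow_le_rpow_abs_mul_rpow {X Y L : ℝ} (r : ℝ) (hX : 0 ≤ X) (hY : 0 ≤ Y)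
    (hXY : X ≤ L * Y) (hYX : Y ≤ L * X) : X ^ r ≤ L ^ |r| * Y ^ r := by
  rcases hX.eq_or_lt with rfl | hX
  · obtain rfl : Y = 0 := by linarith
    rcases eq_or_ne r 0 with rfl | hr
    · simp
    · simp [zero_rpow hr]
  have hY : 0 < Y := by
    by_contra! h
    nlinarith
  have hL : 0 < L := by
    by_contra! h
    nlinarith
  rcases le_total 0 r with hr | hr
  · rw [abs_of_nonneg hr, ← mul_rpow hL.le hY.le]
    exact rpow_le_rpow hX.le hXY hr
  · rw [abs_of_nonpos hr]
    calc X ^ r = L ^ (-r) * (L * X) ^ r := by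
          rw [mul_rpow hL.le hX.le, ← mul_assoc, ← rpow_add hL, neg_add_cancel, rpow_zero,
            one_mul]
      _ ≤ L ^ (-r) * Y ^ r :=
          mul_le_mul_of_nonneg_left (rpow_le_rpow_of_nonpos hY hYX hr) (by positivity)

noncomputable def phi (p δ t : ℝ) : ℝ := ∫ s in (0:ℝ)..t, phiDeriv p δ s

section
variable {p K : ℝ}

lemma phiDeriv_nonneg (hK : 0 ≤ K) {t : ℝ} (ht : 0 ≤ t) : 0 ≤ phiDeriv p K t :=
  mul_nonneg (rpow_nonneg (by linarith) _) ht

lemma phiDeriv_eq_rpow_mul_div (t : ℝ) (h : 0 < K + t) :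
    phiDeriv p K t = (K + t) ^ (p - 1) * (t / (K + t)) := by
  rw [phiDeriv, show p - 1 = p - 2 + 1 by ring, rpow_add_one h.ne']
  field_simp

lemma phiDeriv_monotoneOn (hp : 1 ≤ p) (hK : 0 ≤ K) : MonotoneOn (phiDeriv p K) (Ici 0) := by
  intro s hs u hu hsu
  rcases (show (0:ℝ) ≤ s from hs).eq_or_lt with rfl | hs
  · simpa [phiDeriv] using phiDeriv_nonneg hK hu
  have hu : 0 < u := hs.trans_le hsu
  rw [phiDeriv_eq_rpow_mul_div s (by linarith), phiDeriv_eq_rpow_mul_div u (by linarith)]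
  gcongr ?_ * ?_
  · exact rpow_le_rpow (by linarith) (by linarith) (by linarith)
  · rw [div_le_div_iff₀ (by linarith) (by linarith)]
    nlinarith

lemma phiDeriv_mul_rpow_le (hp : 1 ≤ p) (hK : 0 ≤ K) {s t : ℝ} (hs : 0 ≤ s) (hst : s ≤ t) :
    phiDeriv p K t * (s / t) ^ p ≤ phiDeriv p K s := by
  rcases hs.eq_or_lt with rfl | hs
  · simp [phiDeriv, zero_rpow (by linarith : p ≠ 0)]
  have ht : 0 < t := hs.trans_le hst
  have hpow : (s / t) ^ p = (s / t) ^ (p - 1) * (s / t) := by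
    rw [← rpow_add_one (by positivity)]; ring_nf
  rw [phiDeriv_eq_rpow_mul_div s (by linarith), phiDeriv_eq_rpow_mul_div t (by linarith), hpow]
  calc (K + t) ^ (p - 1) * (t / (K + t)) * ((s / t) ^ (p - 1) * (s / t))
      = ((K + t) * (s / t)) ^ (p - 1) * (s / (K + t)) := by
        rw [mul_rpow (by linarith) (by positivity)]
        field_simp
    _ ≤ (K + s) ^ (p - 1) * (s / (K + s)) := by
        gcongr ?_ * ?_
        · refine rpow_le_rpow (by positivity) ?_ (by linarith)
          rw [mul_div_assoc', div_le_iff₀ ht]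
          nlinarith
        · exact div_le_div_of_nonneg_left hs.le (by linarith) (by linarith)

lemma intervalIntegrable_phiDeriv (hp : 1 ≤ p) (hK : 0 ≤ K) {t : ℝ} (ht : 0 ≤ t) :
    IntervalIntegrable (phiDeriv p K) volume 0 t :=
  ((phiDeriv_monotoneOn hp hK).mono
    (by simp [uIcc_of_le ht, Icc_subset_Ici_self])).intervalIntegrable

lemma phi_nonneg (hK : 0 ≤ K) {t : ℝ} (ht : 0 ≤ t) : 0 ≤ phi p K t :=
  intervalIntegral.integral_nonneg ht fun _ hs => phiDeriv_nonneg hK hs.1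

lemma phi_le_mul_phiDeriv (hp : 1 ≤ p) (hK : 0 ≤ K) {t : ℝ} (ht : 0 ≤ t) :
    phi p K t ≤ t * phiDeriv p K t := by
  calc phi p K t ≤ ∫ _ in (0:ℝ)..t, phiDeriv p K t :=
        intervalIntegral.integral_mono_on ht (intervalIntegrable_phiDeriv hp hK ht)
          intervalIntegrable_const fun s hs =>
            phiDeriv_monotoneOn hp hK hs.1 (show (0:ℝ) ≤ t from ht) hs.2
    _ = t * phiDeriv p K t := by simp

lemma mul_phiDeriv_le_phi (hp : 1 ≤ p) (hK : 0 ≤ K) {t : ℝ} (ht : 0 ≤ t) :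
    t * phiDeriv p K t ≤ (p + 1) * phi p K t := by
  rcases ht.eq_or_lt with rfl | ht
  · simp [phi]
  have hint : ∫ s in (0:ℝ)..t, phiDeriv p K t * (s / t) ^ p = t * phiDeriv p K t / (p + 1) := by
    rw [intervalIntegral.integral_const_mul,
      intervalIntegral.integral_comp_div (fun x => x ^ p) ht.ne',
      integral_rpow (Or.inl (by linarith)), zero_div, div_self ht.ne', one_rpow,
      zero_rpow (by linarith)]
    simp only [smul_eq_mul]
    ring
  have hle : t * phiDeriv p K t / (p + 1) ≤ phi p K t := by
    rw [← hint]
    refine intervalIntegral.integral_mono_on ht.le ?_ (intervalIntegrable_phiDeriv hp hK ht.le)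
      fun s hs => phiDeriv_mul_rpow_le hp hK hs.1 hs.2
    exact ((continuous_id.div_const t).rpow_const fun _ => Or.inr (by linarith)).intervalIntegrable
      _ _ |>.const_mul _
  rwa [div_le_iff₀' (by linarith)] at hle

lemma mul_phiDeriv_le_of_abs_sub_le {A B L s : ℝ} (hA : 0 ≤ A) (hB : 0 ≤ B) (hs : 0 ≤ s)
    (hL : 1 ≤ L) (hAB : |A - B| ≤ (L - 1) * s) :
    s * phiDeriv p A s ≤ L ^ |p - 2| * (s * phiDeriv p B s) := by
  obtain ⟨hBA, hAB⟩ := abs_le.mp hAB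
  have key := rpow_le_rpow_abs_mul_rpow (p - 2) (by linarith : 0 ≤ A + s)
    (by linarith : 0 ≤ B + s) (L := L) (by nlinarith) (by nlinarith)
  calc s * phiDeriv p A s = (A + s) ^ (p - 2) * (s * s) := by rw [phiDeriv]; ring
    _ ≤ L ^ |p - 2| * (B + s) ^ (p - 2) * (s * s) := by gcongr
    _ = L ^ |p - 2| * (s * phiDeriv p B s) := by rw [phiDeriv]; ring

lemma phi_le_of_abs_sub_le (hp : 1 ≤ p) {A B L t : ℝ} (hA : 0 ≤ A) (hB : 0 ≤ B) (ht : 0 ≤ t)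
    (hL : 1 ≤ L) (hAB : |A - B| ≤ (L - 1) * t) :
    phi p A t ≤ (p + 1) * L ^ |p - 2| * phi p B t :=
  calc phi p A t ≤ t * phiDeriv p A t := phi_le_mul_phiDeriv hp hA ht
    _ ≤ L ^ |p - 2| * ((p + 1) * phi p B t) :=
        (mul_phiDeriv_le_of_abs_sub_le hA hB ht hL hAB).trans
          (mul_le_mul_of_nonneg_left (mul_phiDeriv_le_phi hp hB ht) (by positivity))
    _ = (p + 1) * L ^ |p - 2| * phi p B t := by ring

lemma phi_le_of_le_mul (hp : 1 ≤ p) {K θ t d : ℝ} (hK : 0 ≤ K) (ht : 0 ≤ t) (htd : t ≤ d)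
    (htθ : t ≤ θ * d) : phi p K t ≤ θ * (d * phiDeriv p K d) := by
  have hd : 0 ≤ d := ht.trans htd
  calc phi p K t ≤ t * phiDeriv p K t := phi_le_mul_phiDeriv hp hK ht
    _ ≤ t * phiDeriv p K d :=
        mul_le_mul_of_nonneg_left (phiDeriv_monotoneOn hp hK ht hd htd) ht
    _ ≤ θ * d * phiDeriv p K d := mul_le_mul_of_nonneg_right htθ (phiDeriv_nonneg hK hd)
    _ = θ * (d * phiDeriv p K d) := mul_assoc _ _ _

lemma phi_le_mul_min_of_le_mul (hp : 1 ≤ p) {A B θ t d : ℝ} (hA : 0 ≤ A) (hB : 0 ≤ B)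
    (hAB : |A - B| ≤ d) (hθ0 : 0 ≤ θ) (hθ1 : θ ≤ 1) (ht : 0 ≤ t) (htθ : t ≤ θ * d) :
    phi p A t ≤ θ * ((p + 1) * 2 ^ |p - 2|) * min (phi p A d) (phi p B d) := by
  have hd : 0 ≤ d := (abs_nonneg _).trans hAB
  have hAt := phi_le_of_le_mul hp hA ht (htθ.trans (by nlinarith)) htθ
  have hAd := mul_phiDeriv_le_phi hp hA hd
  have hBd := (mul_phiDeriv_le_of_abs_sub_le (p := p) hA hB hd one_le_two (by linarith)).trans
    (mul_le_mul_of_nonneg_left (mul_phiDeriv_le_phi hp hB hd) (by positivity))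
  have hM : (1 : ℝ) ≤ 2 ^ |p - 2| := one_le_rpow one_le_two (abs_nonneg _)
  rw [mul_min_of_nonneg _ _ (by positivity)]
  refine le_min (hAt.trans ?_) (hAt.trans ?_)
  · calc θ * (d * phiDeriv p A d) ≤ θ * ((p + 1) * phi p A d) := by gcongr
      _ ≤ θ * (2 ^ |p - 2| * ((p + 1) * phi p A d)) :=
        mul_le_mul_of_nonneg_left
          (le_mul_of_one_le_left (mul_nonneg (by linarith) (phi_nonneg hA hd)) hM) hθ0
      _ = θ * ((p + 1) * 2 ^ |p - 2|) * phi p A d := by ring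
  · calc θ * (d * phiDeriv p A d) ≤ θ * (2 ^ |p - 2| * ((p + 1) * phi p B d)) := by gcongr
      _ = θ * ((p + 1) * 2 ^ |p - 2|) * phi p B d := by ring

theorem exists_phi_le_mul_phi_add_mul_min (hp : 1 < p) {ε : ℝ} (hε0 : 0 < ε) (hε1 : ε ≤ 1) :
    ∃ c : ℝ, 0 < c ∧ ∀ A B d t : ℝ, 0 ≤ A → 0 ≤ B → |A - B| ≤ d → 0 ≤ t →
      phi p A t ≤ c * phi p B t + ε * min (phi p A d) (phi p B d) := by
  have hM : (1 : ℝ) ≤ 2 ^ |p - 2| := one_le_rpow one_le_two (abs_nonneg _)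
  set θ := ε / ((p + 1) * 2 ^ |p - 2|)
  have hθ0 : 0 < θ := by positivity
  have hθε : θ * ((p + 1) * 2 ^ |p - 2|) = ε := div_mul_cancel₀ _ (by positivity)
  have hθ1 : θ ≤ 1 := div_le_one_of_le₀ (by nlinarith) (by positivity)
  refine ⟨(p + 1) * (1 + θ⁻¹) ^ |p - 2|, by positivity, fun A B d t hA hB hAB ht => ?_⟩
  have hd : 0 ≤ d := (abs_nonneg _).trans hAB
  rcases le_total t (θ * d) with hsmall | hbig
  · have hBt : 0 ≤ (p + 1) * (1 + θ⁻¹) ^ |p - 2| * phi p B t := by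
      have := phi_nonneg (p := p) hB ht
      positivity
    have := phi_le_mul_min_of_le_mul hp.le hA hB hAB hθ0.le hθ1 ht hsmall
    rw [hθε] at this
    linarith
  · have hdt : |A - B| ≤ (1 + θ⁻¹ - 1) * t := by
      rw [add_sub_cancel_left, inv_mul_eq_div, le_div_iff₀ hθ0]
      nlinarith
    have hmin : 0 ≤ ε * min (phi p A d) (phi p B d) :=
      mul_nonneg hε0.le (le_min (phi_nonneg hA hd) (phi_nonneg hB hd))
    have := phi_le_of_abs_sub_le hp.le hA hB ht (le_add_of_nonneg_right (by positivity)) hdt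
    linarith
end

/-- The integrands agree except at `s = -a`, where `phiShift` divides by zero. -/
lemma phiShift_eq_phi (p δ a t : ℝ) : phiShift p δ a t = phi p (δ + a) t := by
  refine intervalIntegral.integral_congr_ae ?_
  filter_upwards [compl_mem_ae_iff.mpr (measure_singleton (μ := volume) (-a))] with s hs _
  have has : a + s ≠ 0 := fun h => hs (mem_singleton_iff.mpr (by linarith))
  rw [phiDeriv, phiDeriv, ← add_assoc]
  field_simp

lemma abs_frob_sub_frob_le (P Q : Matrix (Fin 3) (Fin 3) ℝ) :
    |frob P - frob Q| ≤ frob (P - Q) := by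
  open scoped Matrix.Norms.Frobenius in
  have frob_eq_norm (P : Matrix (Fin 3) (Fin 3) ℝ) : frob P = ‖P‖ := by
    rw [Matrix.frobenius_norm_def, frob, sqrt_eq_rpow]
    simp [Real.norm_eq_abs, sq_abs]
  simpa only [frob_eq_norm] using abs_norm_sub_norm_le P Q

/-- Change of shift: for `p ∈ (1,∞)` and every `ε ∈ (0,1)` there exists `c_ε > 0`
depending only on `p` and `ε` such that for all `δ ≥ 0`, all 3×3 matrices `P, Q`
and all `t ≥ 0`: `φ_{|P|}(t) ≤ c_ε·φ_{|Q|}(t) + ε·φ_{|P|}(|P−Q|)` and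
`φ_{|P|}(t) ≤ c_ε·φ_{|Q|}(t) + ε·φ_{|Q|}(|P−Q|)`. -/
theorem shift_change (p : ℝ) (hp : 1 < p) (ε : ℝ) (hε0 : 0 < ε) (hε1 : ε < 1) :
    ∃ c : ℝ, 0 < c ∧
      ∀ δ : ℝ, 0 ≤ δ → ∀ P Q : Matrix (Fin 3) (Fin 3) ℝ, ∀ t : ℝ, 0 ≤ t →
        phiShift p δ (frob P) t
            ≤ c * phiShift p δ (frob Q) t + ε * phiShift p δ (frob P) (frob (P - Q)) ∧
        phiShift p δ (frob P) t
            ≤ c * phiShift p δ (frob Q) t + ε * phiShift p δ (frob Q) (frob (P - Q)) := by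
  obtain ⟨c, hc, hphi⟩ := exists_phi_le_mul_phi_add_mul_min hp hε0 hε1.le
  refine ⟨c, hc, fun δ hδ P Q t ht => ?_⟩
  have hmain := hphi (δ + frob P) (δ + frob Q) (frob (P - Q)) t
    (add_nonneg hδ (sqrt_nonneg _)) (add_nonneg hδ (sqrt_nonneg _))
    (by simpa only [add_sub_add_left_eq_sub] using abs_frob_sub_frob_le P Q) ht
  simp only [phiShift_eq_phi]
  exact ⟨hmain.trans (by gcongr; exact min_le_left _ _),
    hmain.trans (by gcongr; exact min_le_right _ _)⟩
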